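/- arXiv:2209.08926 — 9 statements merged into one kernel-verified Lean document; each statement's English description precedes it below -/
import Mathlib

section
/- If p and q are periods of a string u of length n with 0 ≤ q ≤ p, then both the prefix of u of length n-q and the suffix of u of length n-q have period p-q. -/
def IsPeriod {α : Type*} (n : ℕ) (u : Fin n → α) (p : ℕ) : Prop :=
  p < n ∧ ∀ (i : ℕ) (h : i + p < n),
    u ⟨i, Nat.lt_of_le_of_lt (Nat.le_add_right i p) h⟩ = u ⟨i + p, h⟩

theorem sub_period {α : Type*} {n p q : ℕ} (u : Fin n → α) (hqp : q ≤ p)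
    (hp : IsPeriod n u p) (hq : IsPeriod n u q) :
    IsPeriod (n - q) (fun i : Fin (n - q) => u ⟨i, by omega⟩) (p - q) ∧
    IsPeriod (n - q) (fun i : Fin (n - q) => u ⟨q + i, by omega⟩) (p - q) := by
  obtain ⟨hpn, hpu⟩ := hp
  obtain ⟨hqn, hqu⟩ := hq
  constructor
  · refine ⟨by omega, fun i h => ?_⟩
    simp only
    have h1 : i + p < n := by omega
    have h2 : (i + (p - q)) + q < n := by omega
    have e1 := hpu i h1
    have e2' : u ⟨i + (p - q), by omega⟩ = u ⟨i + p, h1⟩ := by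
      rw [show (⟨i + p, h1⟩ : Fin n) = ⟨i + (p - q) + q, h2⟩ by ext; simp; omega]
      exact hqu _ h2
    rw [e1, ← e2']
  · refine ⟨by omega, fun i h => ?_⟩
    simp only
    have h1 : i + p < n := by omega
    have h2 : i + q < n := by omega
    have e1 := hpu i h1
    have e2 := hqu i h2
    have : u ⟨q + i, by omega⟩ = u ⟨i + p, h1⟩ := by
      rw [show (⟨q + i, by omega⟩ : Fin n) = ⟨i + q, h2⟩ by simp [Nat.add_comm]]
      rw [← e2, e1]
    rw [this]
    congr 1
    ext
    simp
    omega
end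

section
/- (Fine and Wilf) If p and q are periods of a string u of length n and n ≥ p + q - gcd(p,q), then gcd(p,q) is also a period of u. -/
private lemma ueq {α : Type*} {n : ℕ} (u : Fin n → α) {a b : ℕ} (ha : a < n) (hb : b < n)
    (h : a = b) : u ⟨a, ha⟩ = u ⟨b, hb⟩ := by subst h; rfl

/-- chaining a period g within a prefix of length m -/
private lemma chain {α : Type*} {n g m : ℕ} (u : Fin n → α) (hm : m ≤ n)
    (hpre : ∀ i (h : i + g < m), u ⟨i, by omega⟩ = u ⟨i + g, by omega⟩) :
    ∀ t j (h : j + t * g < m), u ⟨j, by omega⟩ = u ⟨j + t * g, by omega⟩ := by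
  intro t
  induction t with
  | zero => intro j h; exact ueq u (by omega) (by omega) (by omega)
  | succ t IH =>
    intro j h
    have h1 : j + t * g < m := by have : t * g ≤ (t+1) * g := by
                                    exact Nat.mul_le_mul_right g (by omega)
                                  omega
    have h2 : (j + t * g) + g < m := by have : (t+1) * g = t * g + g := by ring
                                        omega
    calc u ⟨j, by omega⟩ = u ⟨j + t * g, by omega⟩ := IH j h1
      _ = u ⟨j + t * g + g, by omega⟩ := hpre _ h2
      _ = u ⟨j + (t+1) * g, by omega⟩ := ueq u (by omega) (by omega) (by ring)

/-- extend a period from the prefix of length n - p to the whole word -/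
private lemma extend {α : Type*} {n p g : ℕ} (u : Fin n → α) (hp : IsPeriod n u p)
    (hgp : g ∣ p) (hg0 : 0 < g) (hgle : g ≤ p) (hgn : g < n) (hpm : p ≤ n - p)
    (hpre : ∀ i (h : i + g < n - p), u ⟨i, by omega⟩ = u ⟨i + g, by omega⟩) :
    IsPeriod n u g := by
  have hpn : p < n := hp.1
  refine ⟨hgn, ?_⟩
  intro i hig
  induction i using Nat.strong_induction_on with
  | _ i IH =>
    by_cases hcase : i + g < n - p
    · exact hpre i hcase
    · push_neg at hcase
      have h1 : p ≤ i + g := le_trans hpm hcase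
      obtain ⟨j, hj⟩ : ∃ j, i + g = j + p := ⟨i + g - p, by omega⟩
      have step1 : u ⟨i + g, by omega⟩ = u ⟨j, by omega⟩ := by
        have := hp.2 j (by omega)
        exact (this.trans (ueq u (by omega) (by omega) (by omega))).symm
      by_cases hip : p ≤ i
      · have step2 : u ⟨i, by omega⟩ = u ⟨i - p, by omega⟩ := by
          have := hp.2 (i - p) (by omega)
          exact (this.trans (ueq u (by omega) (by omega) (by omega))).symm
        have step3 : u ⟨i - p, by omega⟩ = u ⟨i - p + g, by omega⟩ :=
          IH (i - p) (by omega) (by omega)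
        rw [step2, step3, step1]
        exact ueq u (by omega) (by omega) (by omega)
      · push_neg at hip
        obtain ⟨t, ht⟩ := (Nat.dvd_sub hgp dvd_rfl : g ∣ p - g)
        have ht' : j + t * g = i := by rw [Nat.mul_comm, ← ht]; omega
        have hchain := chain u (by omega : n - p ≤ n) hpre t j
          (by rw [ht']; omega)
        rw [step1]
        exact (hchain.trans (ueq u (by rw [ht']; omega) (by omega) ht')).symm

private lemma fw_aux {α : Type*} : ∀ q p n (u : Fin n → α), p ≤ q →
    IsPeriod n u p → IsPeriod n u q →
    p + q - Nat.gcd p q ≤ n → IsPeriod n u (Nat.gcd p q) := by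
  intro q
  induction q using Nat.strong_induction_on with
  | _ q IHq =>
    intro p n u hpq hp hq hn
    by_cases hp0 : p = 0
    · subst hp0; simpa using hq
    · by_cases hgp : Nat.gcd p q = p
      · rw [hgp]; exact hp
      · set g := Nat.gcd p q with hg
        have hgdp : g ∣ p := Nat.gcd_dvd_left p q
        have hgdq : g ∣ q := Nat.gcd_dvd_right p q
        have hg0 : 0 < g := Nat.gcd_pos_of_pos_left q (Nat.pos_of_ne_zero hp0)
        have hglp : g < p := lt_of_le_of_ne (Nat.le_of_dvd (Nat.pos_of_ne_zero hp0) hgdp) hgp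
        have hplq : p < q := by
          rcases lt_or_eq_of_le hpq with h | h
          · exact h
          · exfalso; apply hgp; rw [hg, h, Nat.gcd_self]
        have hgdqp : g ∣ (q - p) := Nat.dvd_sub hgdq hgdp
        have hqpg : g ≤ q - p := Nat.le_of_dvd (by omega) hgdqp
        have hqn : q < n := hq.1
        have hpn : p < n := hp.1
        -- p ≤ q - g
        have hpqg : p ≤ q - g := by
          obtain ⟨a, ha⟩ := hgdp
          obtain ⟨b, hb⟩ := hgdq
          have : a < b := by
            by_contra hab
            push_neg at hab
            have : q ≤ p := by rw [ha, hb]; exact Nat.mul_le_mul_left g hab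
            omega
          have : a + 1 ≤ b := this
          have : g * (a+1) ≤ g * b := Nat.mul_le_mul_left g this
          omega
        set m := n - p with hm
        have hmn : m ≤ n := by omega
        have hqgm : q - g ≤ m := by omega
        have hpm : p ≤ m := le_trans hpqg hqgm
        -- prefix of length m has period q - p
        have hvq : ∀ i (h : i + (q - p) < m), u ⟨i, by omega⟩ = u ⟨i + (q - p), by omega⟩ := by
          intro i h
          by_cases hip : p ≤ i
          · have s1 : u ⟨i - p, by omega⟩ = u ⟨i, by omega⟩ := by
              have := hp.2 (i - p) (by omega)
              exact this.trans (ueq u (by omega) (by omega) (by omega))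
            have s2 : u ⟨i - p, by omega⟩ = u ⟨i + (q - p), by omega⟩ := by
              have := hq.2 (i - p) (by omega)
              exact this.trans (ueq u (by omega) (by omega) (by omega))
            rw [← s1, s2]
          · push_neg at hip
            have s1 : u ⟨i, by omega⟩ = u ⟨i + q, by omega⟩ := hq.2 i (by omega)
            have s2 : u ⟨i + (q - p), by omega⟩ = u ⟨i + q, by omega⟩ := by
              have := hp.2 (i + (q - p)) (by omega)
              exact this.trans (ueq u (by omega) (by omega) (by omega))
            rw [s1, ← s2]
        -- prefix of length m has period g
        have hvg : ∀ i (h : i + g < m), u ⟨i, by omega⟩ = u ⟨i + g, by omega⟩ := by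
          by_cases hpm' : p < m
          · -- apply IH on prefix word
            have hqpm : q - p < m := by omega
            set v : Fin m → α := fun j => u ⟨j.1, by omega⟩ with hv
            have hvp : IsPeriod m v p := by
              refine ⟨hpm', fun i h => ?_⟩
              have := hp.2 i (by omega)
              exact (ueq u (by omega) (by omega) rfl).trans
                (this.trans (ueq u (by omega) (by omega) rfl))
            have hvqp : IsPeriod m v (q - p) := by
              refine ⟨hqpm, fun i h => ?_⟩
              exact (ueq u (by omega) (by omega) rfl).trans
                ((hvq i h).trans (ueq u (by omega) (by omega) rfl))
            have hgcd : Nat.gcd p (q - p) = g := Nat.gcd_sub_self_right hpq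
            have hvres : IsPeriod m v g := by
              rcases le_total p (q - p) with hle | hle
              · have := IHq (q - p) (by omega) p m v hle hvp hvqp
                  (by rw [hgcd]; omega)
                rwa [hgcd] at this
              · have := IHq p (by omega) (q - p) m v hle hvqp hvp
                  (by rw [Nat.gcd_comm, hgcd]; omega)
                rwa [Nat.gcd_comm, hgcd] at this
            intro i h
            have := hvres.2 i h
            exact (ueq u (by omega) (by omega) rfl).trans
              (this.trans (ueq u (by omega) (by omega) rfl))
          · -- p = m, then q - p = g
            have hpem : p = m := by omega
            have hqpeg : q - p = g := by omega
            intro i h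
            have := hvq i (by omega)
            exact this.trans (ueq u (by omega) (by omega) (by omega))
        exact extend u hp hgdp hg0 (by omega) (by omega) (by omega) hvg

theorem fine_and_wilf {α : Type*} {n p q : ℕ} (u : Fin n → α)
    (hp : IsPeriod n u p) (hq : IsPeriod n u q)
    (hn : p + q - Nat.gcd p q ≤ n) : IsPeriod n u (Nat.gcd p q) := by
  rcases le_total p q with h | h
  · exact fw_aux q p n u h hp hq hn
  · have := fw_aux p q n u h hq hp (by rw [Nat.gcd_comm]; omega)
    rwa [Nat.gcd_comm] at this
end

section
/- Let u be a string of length n with autocorrelation s ∈ {0,1}^n. If s[i] = 1 (i.e., i is a period of u), then s[i..n-1] is the autocorrelation of the suffix u[i..n-1]. That is, for all j with 0 ≤ j < n - i, s[i+j] = 1 if and only if j is a period of u[i..n-1]. -/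
theorem autocorrelation_suffix {α : Type*} {n : ℕ} (u : Fin n → α) (s : Fin n → Bool)
    (hs : ∀ k : Fin n, s k = true ↔ IsPeriod n u k)
    (i : ℕ) (hi : i < n) (hsi : s ⟨i, hi⟩ = true) :
    ∀ (j : ℕ) (hj : i + j < n),
      (s ⟨i + j, hj⟩ = true ↔
        IsPeriod (n - i) (fun l : Fin (n - i) => u ⟨i + l, by omega⟩) j) := by
  have hip : IsPeriod n u i := (hs ⟨i, hi⟩).mp hsi
  intro j hj
  rw [hs ⟨i + j, hj⟩]
  show IsPeriod n u (i + j) ↔ _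
  constructor
  · rintro ⟨-, hp⟩
    refine ⟨by omega, ?_⟩
    rintro k hk
    have hk' : k < n - i := by omega
    have h2 := hp k (by omega)
    have h3 := hip.2 k (by omega)
    have h4 := hip.2 (k + j) (by omega)
    show u ⟨i + k, by omega⟩ = u ⟨i + (k + j), by omega⟩
    have e1 : (⟨i + k, by omega⟩ : Fin n) = ⟨k + i, by omega⟩ := by
      apply Fin.ext; simp [Nat.add_comm]
    have e2 : (⟨i + (k + j), by omega⟩ : Fin n) = ⟨k + (i + j), by omega⟩ := by
      apply Fin.ext; simp; omega
    have e3 : (⟨k + j + i, by omega⟩ : Fin n) = ⟨k + (i + j), by omega⟩ := by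
      apply Fin.ext; simp; omega
    rw [e1, e2, ← h3, h2, ← e3, ← h4]
  · rintro ⟨-, hp⟩
    refine ⟨by omega, ?_⟩
    intro m hm
    have h3 := hip.2 m (by omega)
    have h2 := hp m (by omega)
    simp only at h2
    show u ⟨m, by omega⟩ = u ⟨m + (i + j), by omega⟩
    rw [h3]
    have e1 : (⟨m + i, by omega⟩ : Fin n) = ⟨i + (m : ℕ), by omega⟩ := by
      apply Fin.ext; simp [Nat.add_comm]
    have e2 : (⟨m + (i + j), by omega⟩ : Fin n) = ⟨i + (m + j), by omega⟩ := by
      apply Fin.ext; simp; omega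
    rw [e1, e2]
    exact h2
end

section
/- (Forward Propagation Rule) If p ≤ q are periods of a string u of length n and k is a nonnegative integer with p + k(q - p) < n, then p + k(q - p) is a period of u. -/
theorem forward_propagation {α : Type*} {n p q k : ℕ} (u : Fin n → α)
    (hpq : p ≤ q) (hp : IsPeriod n u p) (hq : IsPeriod n u q)
    (hk : p + k * (q - p) < n) : IsPeriod n u (p + k * (q - p)) := by
  refine ⟨hk, ?_⟩
  clear hk
  induction k with
  | zero => simpa using hp.2
  | succ k ih =>
    intro i h
    have hmul : (k + 1) * (q - p) = k * (q - p) + (q - p) := by ring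
    have hq1 : i + q < n := by omega
    have hp1 : i + (q - p) + p < n := by omega
    have e1 : u ⟨i, by omega⟩ = u ⟨i + q, hq1⟩ := hq.2 i hq1
    have e2 : u ⟨i + (q - p), by omega⟩ = u ⟨i + (q - p) + p, hp1⟩ :=
      hp.2 (i + (q - p)) hp1
    have h3 : i + (q - p) + (p + k * (q - p)) < n := by omega
    have e3 : u ⟨i + (q - p), by omega⟩ =
        u ⟨i + (q - p) + (p + k * (q - p)), h3⟩ := ih (i + (q - p)) h3
    have eq1 : (⟨i + q, hq1⟩ : Fin n) = ⟨i + (q - p) + p, hp1⟩ := by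
      ext; simp; omega
    have eq2 : (⟨i + (q - p) + (p + k * (q - p)), h3⟩ : Fin n) =
        ⟨i + (p + (k + 1) * (q - p)), h⟩ := by
      ext; simp; omega
    rw [e1, eq1, ← e2, e3, eq2]
end

section
/- The period set P(u) of any string u of length n is closed under the forward propagation rule, i.e., FC_n(P(u)) = P(u). -/
/-- Generators of the forward closure: smallest superset of `S` closed under the
forward propagation rule. -/
inductive FCgen (n : ℕ) (S : Set ℕ) : ℕ → Prop
  | base {p : ℕ} : p ∈ S → FCgen n S p
  | step {p q k : ℕ} : FCgen n S p → FCgen n S q → p ≤ q →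
      p + k * (q - p) < n → FCgen n S (p + k * (q - p))

/-- The forward closure of a set `S ⊆ {0,…,n-1}`. -/
def FC (n : ℕ) (S : Set ℕ) : Set ℕ := {m | FCgen n S m}

/-- The period set of a string. -/
def PeriodSet {α : Type*} (n : ℕ) (u : Fin n → α) : Set ℕ := {p | IsPeriod n u p}

/-- `R` is the irreducible period set of `P`: a minimal subset of `P` whose
forward closure is `P`. -/
def IsIrred (n : ℕ) (P R : Set ℕ) : Prop :=
  R ⊆ P ∧ FC n R = P ∧ ∀ R' ⊆ R, FC n R' = P → R' = R

private lemma key {α : Type*} {n p q : ℕ} {u : Fin n → α}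
    (hp : IsPeriod n u p) (hq : IsPeriod n u q) (hpq : p ≤ q) :
    ∀ k i (h : i + (p + k * (q - p)) < n),
      u ⟨i, by omega⟩ = u ⟨i + (p + k * (q - p)), h⟩ := by
  have ueq : ∀ {a b : ℕ} (ha : a < n) (hb : b < n), a = b → u ⟨a, ha⟩ = u ⟨b, hb⟩ := by
    rintro a b ha hb rfl; rfl
  intro k
  induction k with
  | zero =>
    intro i h
    have h' : i + p < n := by omega
    have := hp.2 i h'
    rw [this]
    exact ueq h' h (by omega)
  | succ k ih =>
    intro i h
    set d := q - p with hd
    have hmul : (k + 1) * d = d + k * d := by ring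
    have h2 : i + d + (p + k * d) < n := by omega
    have h1 : i + q < n := by omega
    have e1 : u ⟨i, by omega⟩ = u ⟨i + q, h1⟩ := by
      have := hq.2 i h1
      rw [← this]
    have e2 := ih (i + d) h2
    have h3 : i + d + p < n := by omega
    have e3 := hp.2 (i + d) h3
    have e4 : u ⟨i + d + p, h3⟩ = u ⟨i + q, h1⟩ := ueq h3 h1 (by omega)
    rw [e1, ← e4, ← e3, e2]
    exact ueq h2 h (by omega)

theorem FC_periodSet {α : Type*} {n : ℕ} (u : Fin n → α) :
    FC n (PeriodSet n u) = PeriodSet n u := by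
  ext m
  constructor
  · intro hm
    induction hm with
    | base h => exact h
    | @step p q k _ _ hpq hlt ihp ihq =>
      refine ⟨hlt, ?_⟩
      intro i h
      exact key ihp ihq hpq k i h
  · intro hm
    exact FCgen.base hm
end

section
/- Let P ⊆ {0,...,n-1} be a set with FC_n(P) = P, and let R be a minimal (with respect to inclusion) subset of P with FC_n(R) = P. Then R = {q ∈ P : q ∉ FC_n(P ∩ [0, q-1])}. In particular, the minimal such subset R is unique. -/
theorem FC_mono {n : ℕ} {S T : Set ℕ} (h : S ⊆ T) : FC n S ⊆ FC n T := by
  intro m hm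
  induction hm with
  | base hp => exact FCgen.base (h hp)
  | step _ _ hpq hlt ihp ihq => exact FCgen.step ihp ihq hpq hlt

theorem FC_trans {n : ℕ} {S T : Set ℕ} (h : S ⊆ FC n T) : FC n S ⊆ FC n T := by
  intro m hm
  induction hm with
  | base hp => exact h hp
  | step _ _ hpq hlt ihp ihq => exact FCgen.step ihp ihq hpq hlt

theorem FC_restrict {n q : ℕ} {S : Set ℕ} {m : ℕ} (hm : FCgen n S m) (hq : m < q) :
    FCgen n (S ∩ Set.Iio q) m := by
  induction hm with
  | base hp => exact FCgen.base ⟨hp, hq⟩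
  | @step p q' k _ _ hpq hlt ihp ihq =>
    rcases Nat.eq_zero_or_pos (k * (q' - p)) with h0 | hpos
    · rw [h0] at hq hlt ⊢
      simpa using ihp (by simpa using hq)
    · have hk : 0 < k := Nat.pos_of_ne_zero (by rintro rfl; simp at hpos)
      have hd : q' - p ≤ k * (q' - p) := Nat.le_mul_of_pos_left _ hk
      have hq'le : q' ≤ p + k * (q' - p) := by
        calc q' = p + (q' - p) := (Nat.add_sub_cancel' hpq).symm
        _ ≤ p + k * (q' - p) := Nat.add_le_add_left hd p
      exact FCgen.step (ihp (lt_of_le_of_lt (Nat.le_add_right _ _) hq))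
        (ihq (lt_of_le_of_lt hq'le hq)) hpq hlt

theorem FC_decomp {n : ℕ} {S : Set ℕ} {m : ℕ} (hm : FCgen n S m) :
    m ∈ S ∨ FCgen n (S ∩ Set.Iio m) m := by
  induction hm with
  | base hp => exact Or.inl hp
  | @step p q' k hp hq' hpq hlt ihp ihq =>
    rcases Nat.eq_zero_or_pos (k * (q' - p)) with h0 | hpos
    · rw [h0]
      simpa using ihp
    · have hk : 0 < k := Nat.pos_of_ne_zero (by rintro rfl; simp at hpos)
      have hd : 0 < q' - p := Nat.pos_of_ne_zero (by intro h; rw [h] at hpos; simp at hpos)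
      by_cases hk1 : k = 1
      · subst hk1
        have he : p + 1 * (q' - p) = q' := by
          rw [one_mul]; exact Nat.add_sub_cancel' hpq
        rw [he]
        exact ihq
      · have h2 : 1 < k := by omega
        have hdd : q' - p < k * (q' - p) := (lt_mul_iff_one_lt_left hd).mpr h2
        have hq'lt : q' < p + k * (q' - p) := by
          calc q' = p + (q' - p) := (Nat.add_sub_cancel' hpq).symm
          _ < p + k * (q' - p) := Nat.add_lt_add_left hdd p
        have hplt : p < p + k * (q' - p) := lt_of_le_of_lt hpq hq'lt
        exact Or.inr (FCgen.step (FC_restrict hp hplt) (FC_restrict hq' hq'lt) hpq hlt)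

theorem irreducible_characterization {n : ℕ} (P R : Set ℕ) (hPn : P ⊆ Set.Iio n)
    (hP : FC n P = P) (hRP : R ⊆ P) (hR : FC n R = P)
    (hmin : ∀ R' ⊆ R, FC n R' = P → R' = R) :
    R = {q ∈ P | q ∉ FC n (P ∩ Set.Iio q)} := by
  ext q
  simp only [Set.mem_setOf_eq]
  constructor
  · intro hqR
    refine ⟨hRP hqR, ?_⟩
    intro hqFC
    have hsub : R \ {q} ⊆ R := Set.diff_subset
    have hfc : FC n (R \ {q}) = P := by
      apply Set.Subset.antisymm
      · rw [← hP]; exact FC_mono (hsub.trans hRP)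
      · rw [← hR]
        apply FC_trans
        intro x hxR
        by_cases hx : x = q
        · subst hx
          have h1 : P ∩ Set.Iio x ⊆ FC n (R \ {x}) := by
            rintro y ⟨hyP, hylt⟩
            have hy : FCgen n R y := by rw [← hR] at hyP; exact hyP
            refine FC_mono ?_ (FC_restrict hy hylt)
            rintro z ⟨hz1, hz2⟩
            exact ⟨hz1, fun he => absurd (he ▸ hz2) (lt_irrefl x)⟩
          exact FC_trans h1 hqFC
        · exact FCgen.base ⟨hxR, hx⟩
    have heq := hmin _ hsub hfc
    have : q ∈ R \ {q} := by rw [heq]; exact hqR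
    exact this.2 rfl
  · rintro ⟨hqP, hqn⟩
    have hq : FCgen n R q := by rw [← hR] at hqP; exact hqP
    rcases FC_decomp hq with h | h
    · exact h
    · exact absurd (FC_mono (Set.inter_subset_inter_left _ hRP) h) hqn
end

section
/- For every n, the set Δ_n of correlations of pairs of strings of length n equals {0^{n-j} · s_j : s_j ∈ Γ_j, 0 ≤ j ≤ n}, where 0^{n-j} · s_j denotes the concatenation of n-j zeros and an autocorrelation s_j of length j. -/
/-- `t` is the correlation of `u` over `v` (equal length `n`): `t k = 1` iff the
suffix of `u` starting at `k` matches the prefix of `v` of the same length. -/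
def IsCorr {α : Type*} (n : ℕ) (u v : Fin n → α) (t : Fin n → Bool) : Prop :=
  ∀ k : Fin n, t k = true ↔
    ∀ (j : ℕ) (h : (k : ℕ) + j < n), u ⟨(k : ℕ) + j, h⟩ = v ⟨j, by omega⟩

/-- The set of autocorrelations of (binary) strings of length `j`. -/
def Gamma (j : ℕ) : Set (Fin j → Bool) :=
  {s | ∃ u : Fin j → Bool, ∀ p : Fin j, s p = true ↔ IsPeriod j u (p : ℕ)}

/-- The set of correlations of pairs of (binary) strings of length `n`. -/
def Delta (n : ℕ) : Set (Fin n → Bool) :=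
  {t | ∃ u v : Fin n → Bool, IsCorr n u v t}

lemma fin_congr {α : Type*} {m : ℕ} (f : Fin m → α) {a b : ℕ} (ha : a < m) (hb : b < m)
    (h : a = b) : f ⟨a, ha⟩ = f ⟨b, hb⟩ := by subst h; rfl

theorem delta_characterization (n : ℕ) :
    Delta n = {t : Fin n → Bool | ∃ j, ∃ hj : j ≤ n, ∃ s ∈ Gamma j,
      ∀ k : Fin n, (t k = true ↔
        ∃ h : n - j ≤ (k : ℕ), s ⟨(k : ℕ) - (n - j), by omega⟩ = true)} := by
  classical
  ext t
  simp only [Delta, Set.mem_setOf_eq]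
  constructor
  · rintro ⟨u, v, hc⟩
    by_cases hex : ∃ m : ℕ, ∃ hm : m < n, t ⟨m, hm⟩ = true
    · set k0 := Nat.find hex with hk0def
      obtain ⟨hk0n, ht0⟩ := Nat.find_spec hex
      have hmin : ∀ m, m < k0 → ∀ hm : m < n, ¬ t ⟨m, hm⟩ = true := by
        intro m hm hmn h
        exact Nat.find_min hex hm ⟨hmn, h⟩
      have hjn : n - k0 ≤ n := Nat.sub_le _ _
      set w : Fin (n - k0) → Bool := fun i => v ⟨(i : ℕ), by omega⟩ with hwdef
      refine ⟨n - k0, hjn, fun p => decide (IsPeriod (n - k0) w (p : ℕ)),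
        ⟨w, fun p => by rw [decide_eq_true_eq]⟩, ?_⟩
      have hnj : n - (n - k0) = k0 := by omega
      have hm0 : ∀ (i : ℕ) (h : k0 + i < n), u ⟨k0 + i, h⟩ = v ⟨i, by omega⟩ :=
        (hc ⟨k0, hk0n⟩).mp ht0
      intro k
      simp only [hnj, decide_eq_true_eq]
      constructor
      · intro ht
        have hk0le : k0 ≤ (k : ℕ) := by
          by_contra hlt
          exact hmin (k : ℕ) (by omega) k.isLt (by simpa using ht)
        have matk := (hc k).mp ht
        refine ⟨hk0le, by omega, ?_⟩
        intro i hip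
        -- goal : w ⟨i, _⟩ = w ⟨i + ((k:ℕ) - k0), _⟩
        have hkin : (k : ℕ) + i < n := by omega
        have h0 : k0 + (i + ((k : ℕ) - k0)) < n := by omega
        have e1 : v ⟨i + ((k : ℕ) - k0), by omega⟩ = u ⟨k0 + (i + ((k : ℕ) - k0)), h0⟩ :=
          (hm0 _ h0).symm
        have e2 : u ⟨k0 + (i + ((k : ℕ) - k0)), h0⟩ = u ⟨(k : ℕ) + i, hkin⟩ :=
          fin_congr u _ _ (by omega)
        have e3 : u ⟨(k : ℕ) + i, hkin⟩ = v ⟨i, by omega⟩ := matk i hkin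
        rw [hwdef]
        simp only []
        rw [← e3, ← e2, ← e1]
      · rintro ⟨hk0le, hplt, hper⟩
        refine (hc k).mpr ?_
        intro i hkin
        have hij : i + ((k : ℕ) - k0) < n - k0 := by omega
        have h0 : k0 + (((k : ℕ) - k0) + i) < n := by omega
        have e1 : u ⟨(k : ℕ) + i, hkin⟩ = u ⟨k0 + (((k : ℕ) - k0) + i), h0⟩ :=
          fin_congr u _ _ (by omega)
        have e2 : u ⟨k0 + (((k : ℕ) - k0) + i), h0⟩ = v ⟨((k : ℕ) - k0) + i, by omega⟩ :=
          hm0 _ h0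
        have e3 : w ⟨((k : ℕ) - k0) + i, by omega⟩ = w ⟨i + ((k : ℕ) - k0), hij⟩ :=
          fin_congr w _ _ (by omega)
        have e4 : w ⟨i, by omega⟩ = w ⟨i + ((k : ℕ) - k0), hij⟩ := hper i hij
        rw [e1, e2]
        have e5 : v ⟨((k : ℕ) - k0) + i, by omega⟩ = w ⟨((k : ℕ) - k0) + i, by omega⟩ := rfl
        rw [e5, e3, ← e4]
    · push_neg at hex
      refine ⟨0, Nat.zero_le n, fun p => false, ⟨fun _ => false, fun p => p.elim0⟩, ?_⟩
      intro k
      constructor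
      · intro h
        exact absurd (by simpa using h) (by simpa using hex (k : ℕ) k.isLt)
      · rintro ⟨h, -⟩
        omega
  · rintro ⟨j, hj, s, ⟨w, hw⟩, hts⟩
    set u : Fin n → Bool := fun k =>
      if h : n - j ≤ (k : ℕ) then w ⟨(k : ℕ) - (n - j), by omega⟩ else false with hudef
    set v : Fin n → Bool := fun i =>
      if h : (i : ℕ) < j then w ⟨(i : ℕ), h⟩ else !(u ⟨n - 1, by omega⟩) with hvdef
    refine ⟨u, v, ?_⟩
    intro k
    rw [hts k]
    constructor
    · rintro ⟨hk, hs⟩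
      obtain ⟨hplt, hper⟩ := (hw ⟨(k : ℕ) - (n - j), by omega⟩).mp hs
      intro i hkin
      have hij : i < j := by omega
      have hipj : i + ((k : ℕ) - (n - j)) < j := by omega
      have e1 : u ⟨(k : ℕ) + i, hkin⟩ = w ⟨(k : ℕ) + i - (n - j), by omega⟩ := by
        rw [hudef]
        simp only []
        rw [dif_pos (by omega)]
      have e2 : w ⟨(k : ℕ) + i - (n - j), by omega⟩ = w ⟨i + ((k : ℕ) - (n - j)), hipj⟩ :=
        fin_congr w _ _ (by omega)
      have e3 : w ⟨i, by omega⟩ = w ⟨i + ((k : ℕ) - (n - j)), hipj⟩ := hper i hipj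
      have e4 : v ⟨i, by omega⟩ = w ⟨i, by omega⟩ := by
        rw [hvdef]
        simp only []
        rw [dif_pos hij]
      rw [e1, e2, ← e3, e4]
    · intro mat
      have hnpos : 0 < n := k.pos
      have hk : n - j ≤ (k : ℕ) := by
        by_contra hlt
        push_neg at hlt
        have hi : (k : ℕ) + (n - 1 - (k : ℕ)) < n := by omega
        have := mat (n - 1 - (k : ℕ)) hi
        have e1 : u ⟨(k : ℕ) + (n - 1 - (k : ℕ)), hi⟩ = u ⟨n - 1, by omega⟩ :=
          fin_congr u _ _ (by omega)
        have e2 : v ⟨n - 1 - (k : ℕ), by omega⟩ = !(u ⟨n - 1, by omega⟩) := by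
          rw [hvdef]
          simp only []
          rw [dif_neg (by omega)]
        rw [e1, e2] at this
        simp at this
      refine ⟨hk, ?_⟩
      rw [hw]
      show IsPeriod j w ((k : ℕ) - (n - j))
      refine ⟨by omega, ?_⟩
      intro i hip
      have hkin : (k : ℕ) + i < n := by omega
      have := mat i hkin
      have e1 : u ⟨(k : ℕ) + i, hkin⟩ = w ⟨(k : ℕ) + i - (n - j), by omega⟩ := by
        rw [hudef]
        simp only []
        rw [dif_pos (by omega)]
      have e2 : w ⟨(k : ℕ) + i - (n - j), by omega⟩ = w ⟨i + ((k : ℕ) - (n - j)), by omega⟩ :=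
        fin_congr w _ _ (by omega)
      have e3 : v ⟨i, by omega⟩ = w ⟨i, by omega⟩ := by
        rw [hvdef]
        simp only []
        rw [dif_pos (by omega)]
      rw [e1, e2, e3] at this
      exact this.symm
end

section
/- The number δ_n of distinct correlations between two strings of length n satisfies δ_n = Σ_{j=0}^{n} κ_j, where κ_j is the number of autocorrelations of strings of length j. -/
/-!
If `t` is the correlation of `u` over `v` and its first `1` sits at position `k`, then `v` begins
with the suffix `w` of `u` from `k`; hence `t` vanishes before `k` and from `k` on it is the
autocorrelation of `w`, i.e. `t = 0^k · s` with `s ∈ Γ_{n-k}`. Conversely `0^(n-j) · s` for the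
autocorrelation `s` of `w` is the correlation of `b^(n-j) · w` over `w · …`, where `b` differs
from the first letter of the second string, so that no shift `k < n - j` matches. Since every
autocorrelation of positive length begins with `1`, the length `j` and then `s` are determined by
`0^(n-j) · s`, which makes `Δ_n` the disjoint union of the `0^(n-j) · Γ_j`, `j ≤ n`.
-/

section

variable {α : Type*} {n j k : ℕ}

/-- `padLeft n b s` is `b^(n-j) · s` when `j ≤ n`. -/
def padLeft (n : ℕ) (b : α) (s : Fin j → α) : Fin n → α :=
  fun i => if h : n - j ≤ i then s ⟨i - (n - j), by omega⟩ else b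

def padRight (n : ℕ) (b : α) (s : Fin j → α) : Fin n → α :=
  fun i => if h : (i : ℕ) < j then s ⟨i, h⟩ else b

def suffix (k : ℕ) (u : Fin n → α) : Fin (n - k) → α :=
  fun i => u ⟨k + i, by omega⟩

theorem padLeft_of_le {b : α} {s : Fin j → α} {i : Fin n} (h : n - j ≤ i) :
    padLeft n b s i = s ⟨i - (n - j), by omega⟩ :=
  dif_pos h

theorem padLeft_of_lt {b : α} {s : Fin j → α} {i : Fin n} (h : (i : ℕ) < n - j) :
    padLeft n b s i = b :=
  dif_neg (by omega)

theorem padLeft_add {b : α} {s : Fin j → α} (hj : j ≤ n) (p : Fin j) :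
    padLeft n b s ⟨n - j + p, by omega⟩ = s p := by
  rw [padLeft_of_le (by simp)]
  congr 1
  ext
  simp

theorem padLeft_injective (b : α) (hj : j ≤ n) :
    Function.Injective (padLeft n b : (Fin j → α) → Fin n → α) := by
  intro s s' h
  funext p
  simpa only [padLeft_add hj] using congrFun h ⟨n - j + p, by omega⟩

theorem le_of_padLeft_eq {b : α} {j' : ℕ} {s : Fin j → α} {s' : Fin j' → α} (hj' : j' ≤ n)
    (hs' : ∀ h : 0 < j', s' ⟨0, h⟩ ≠ b) (h : padLeft n b s = padLeft n b s') : j' ≤ j := by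
  by_contra! hlt
  have := congrFun h ⟨n - j' + 0, by omega⟩
  rw [padLeft_of_lt (by simp; omega), padLeft_add hj' ⟨0, by omega⟩] at this
  exact hs' (by omega) this.symm

theorem padLeft_suffix {b : α} {t : Fin n → α} (hk : k ≤ n)
    (h : ∀ i : Fin n, (i : ℕ) < k → t i = b) : padLeft n b (suffix k t) = t := by
  funext i
  by_cases hi : k ≤ i
  · rw [padLeft_of_le (by omega)]
    exact congrArg t (Fin.ext (by dsimp only; omega))
  · rw [padLeft_of_lt (by omega), h i (by omega)]

theorem isCorr_self_iff {u : Fin n → α} {t : Fin n → Bool} :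
    IsCorr n u u t ↔ ∀ p : Fin n, t p = true ↔ IsPeriod n u p := by
  refine forall_congr' fun p => iff_congr Iff.rfl ⟨fun h => ⟨p.2, fun i hi => ?_⟩, fun h i hi => ?_⟩
  · convert (h i (by omega)).symm using 3
    omega
  · convert (h.2 i (by omega)).symm using 3
    omega

theorem mem_Gamma_iff {s : Fin j → Bool} : s ∈ Gamma j ↔ ∃ u : Fin j → Bool, IsCorr j u u s :=
  exists_congr fun _ => isCorr_self_iff.symm

theorem apply_zero_of_mem_Gamma {s : Fin j → Bool} (hs : s ∈ Gamma j) (hj : 0 < j) :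
    s ⟨0, hj⟩ = true := by
  obtain ⟨u, hu⟩ := hs
  exact (hu _).2 ⟨hj, fun _ _ => rfl⟩

theorem IsCorr.suffix {u v : Fin n → α} {t : Fin n → Bool} (hc : IsCorr n u v t) {k : Fin n}
    (hk : t k = true) : IsCorr (n - k) (suffix k u) (suffix k u) (suffix k t) := by
  have hv : ∀ i (hi : k + i < n), v ⟨i, by omega⟩ = u ⟨k + i, hi⟩ :=
    fun i hi => ((hc k).1 hk i hi).symm
  intro p
  refine (hc _).trans ⟨fun h i hi => ?_, fun h i hi => ?_⟩
  · calc u ⟨k + (p + i), by omega⟩ = u ⟨k + p + i, by omega⟩ :=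
          congrArg u (Fin.ext (by dsimp only; omega))
      _ = u ⟨k + i, by omega⟩ := by rw [h i, hv i]
  · replace hi : (k : ℕ) + p + i < n := hi
    calc u ⟨k + p + i, hi⟩ = u ⟨k + (p + i), by omega⟩ :=
          congrArg u (Fin.ext (by dsimp only; omega))
      _ = v ⟨i, by omega⟩ := by rw [hv i (by omega)]; exact h i (by omega)

theorem isCorr_padLeft {w : Fin j → α} {v : Fin n → α} {s : Fin j → Bool} {b : α}
    (hj : j ≤ n) (hw : IsCorr j w w s) (hv : ∀ i (hi : i < j), v ⟨i, by omega⟩ = w ⟨i, hi⟩)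
    (hb : ∀ h : 0 < n, v ⟨0, h⟩ ≠ b) : IsCorr n (padLeft n b w) v (padLeft n false s) := by
  intro k
  by_cases hk : n - j ≤ k
  · rw [padLeft_of_le hk, hw]
    refine ⟨fun h i hi => ?_, fun h i hi => ?_⟩
    · rw [padLeft_of_le (by simp; omega), hv i (by omega), ← h i (by simp at hi ⊢; omega)]
      exact congrArg w (Fin.ext (by dsimp only; omega))
    · rw [← hv i (by omega), ← h i (by simp at hi ⊢; omega), padLeft_of_le (by simp; omega)]
      exact congrArg w (Fin.ext (by dsimp only; omega))
  · rw [padLeft_of_lt (by omega)]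
    refine ⟨Bool.false_ne_true.elim, fun h => ?_⟩
    have := h 0 (by omega)
    rw [padLeft_of_lt (by simp; omega)] at this
    exact (hb (by omega) this.symm).elim

theorem padLeft_mem_Delta (hj : j ≤ n) {s : Fin j → Bool} (hs : s ∈ Gamma j) :
    padLeft n false s ∈ Delta n := by
  obtain ⟨w, hw⟩ := mem_Gamma_iff.1 hs
  let v : Fin n → Bool := padRight n false w
  exact ⟨padLeft n (if h : 0 < n then !v ⟨0, h⟩ else true) w, v,
    isCorr_padLeft hj hw (fun i hi => dif_pos hi) fun h => by simp [h]⟩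

theorem exists_padLeft_eq_of_mem_Delta {t : Fin n → Bool} (ht : t ∈ Delta n) :
    ∃ j ≤ n, ∃ s ∈ Gamma j, padLeft n false s = t := by
  obtain ⟨u, v, hc⟩ := ht
  by_cases hex : ∃ k, t k = true
  · obtain ⟨k, hk, hmin⟩ := WellFounded.has_min wellFounded_lt {k | t k = true} hex
    refine ⟨n - k, by omega, suffix k t, mem_Gamma_iff.2 ⟨_, hc.suffix hk⟩,
      padLeft_suffix (by omega) fun i hi => ?_⟩
    simpa using fun h => hmin i h hi
  · simp only [not_exists, Bool.not_eq_true] at hex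
    exact ⟨0, by omega, Fin.elim0, ⟨Fin.elim0, fun p => p.elim0⟩,
      funext fun i => (padLeft_of_lt (by simp)).trans (hex i).symm⟩

theorem length_eq_of_padLeft_eq {j' : ℕ} (hj : j ≤ n) (hj' : j' ≤ n) {s : Fin j → Bool}
    {s' : Fin j' → Bool} (hs : s ∈ Gamma j) (hs' : s' ∈ Gamma j')
    (h : padLeft n false s = padLeft n false s') : j = j' :=
  have head {i} {r : Fin i → Bool} (hr : r ∈ Gamma i) (hi : 0 < i) : r ⟨0, hi⟩ ≠ false := by
    simp [apply_zero_of_mem_Gamma hr hi]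
  le_antisymm (le_of_padLeft_eq hj (head hs) h.symm) (le_of_padLeft_eq hj' (head hs') h)

end

theorem delta_eq_sum_kappa (n : ℕ) :
    (Delta n).ncard = ∑ j ∈ Finset.range (n + 1), (Gamma j).ncard := by
  let f : (Σ j : Fin (n + 1), Gamma j) → Delta n :=
    fun x => ⟨padLeft n false x.2.1, padLeft_mem_Delta (by omega) x.2.2⟩
  have hf : Function.Bijective f := by
    constructor
    · rintro ⟨j, s, hs⟩ ⟨j', s', hs'⟩ h
      replace h : padLeft n false s = padLeft n false s' := congrArg Subtype.val h
      obtain rfl : j = j' := Fin.ext (length_eq_of_padLeft_eq (by omega) (by omega) hs hs' h)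
      obtain rfl := padLeft_injective false (by omega) h
      rfl
    · rintro ⟨t, ht⟩
      obtain ⟨j, hj, s, hs, rfl⟩ := exists_padLeft_eq_of_mem_Delta ht
      exact ⟨⟨⟨j, by omega⟩, s, hs⟩, rfl⟩
  rw [← Nat.card_coe_set_eq, ← Nat.card_eq_of_bijective f hf, Nat.card_sigma,
    ← Fin.sum_univ_eq_sum_range]
  simp only [Nat.card_coe_set_eq]
end

section
/- For every correlation t ∈ Δ_n (the correlation of some pair of strings of length n over an arbitrary alphabet), there exist strings u, v over the binary alphabet {a,b} of length n whose correlation is t. Hence the set of correlations of pairs of equal-length strings is independent of the alphabet, provided the alphabet has at least two letters. -/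
/-- Bounded period: `w` has period `q` on its prefix of length `n`. -/
def PerN {γ : Type*} (n : ℕ) (w : ℕ → γ) (q : ℕ) : Prop :=
  ∀ i, i + q < n → w i = w (i + q)

namespace PerN

variable {γ : Type*} {n m q g a b : ℕ} {w : ℕ → γ}

lemma mono (h : m ≤ n) (H : PerN n w q) : PerN m w q :=
  fun i hi => H i (lt_of_lt_of_le hi h)

lemma mul (H : PerN n w g) : ∀ (k a : ℕ), a + g * k < n → w a = w (a + g * k) := by
  intro k
  induction k with
  | zero => intro a _; simp
  | succ k ih =>
    intro a ha
    have he : a + g * (k + 1) = (a + g) + g * k := by ring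
    rw [he] at ha ⊢
    have h1 : a + g < n := by omega
    calc w a = w (a + g) := H a h1
      _ = w ((a + g) + g * k) := ih (a + g) ha

lemma dvd (H : PerN n w g) (hd : g ∣ q) : PerN n w q := by
  obtain ⟨k, rfl⟩ := hd
  intro i hi
  exact H.mul k i hi

lemma step (H : PerN n w g) (hab : a ≤ b) (hb : b < n) (hd : g ∣ b - a) : w a = w b := by
  obtain ⟨k, hk⟩ := hd
  have hba : b = a + g * k := by omega
  subst hba
  exact H.mul k a hb

/-- From periods `a ≤ b` with `a + b ≤ n` we get period `b - a`. -/
lemma sub (hab : a ≤ b) (hn : a + b ≤ n) (Ha : PerN n w a) (Hb : PerN n w b) :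
    PerN n w (b - a) := by
  intro i hi
  by_cases hc : i + b < n
  · have e1 : w i = w (i + b) := Hb i hc
    have e2 : w (i + (b - a)) = w ((i + (b - a)) + a) := Ha _ (by omega)
    have e3 : (i + (b - a)) + a = i + b := by omega
    rw [e3] at e2
    rw [e1, e2]
  · -- i + b ≥ n, so i ≥ a
    have hia : a ≤ i := by omega
    have e1 : w (i - a) = w ((i - a) + a) := Ha (i - a) (by omega)
    have e2 : (i - a) + a = i := by omega
    rw [e2] at e1
    have e3 : w (i - a) = w ((i - a) + b) := Hb (i - a) (by omega)
    have e4 : (i - a) + b = i + (b - a) := by omega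
    rw [e4] at e3
    rw [← e1, e3]

/-- Fine–Wilf. -/
lemma gcd : ∀ (N a b : ℕ), a + b ≤ N → 1 ≤ a → 1 ≤ b → a + b ≤ n →
    PerN n w a → PerN n w b → PerN n w (Nat.gcd a b) := by
  intro N
  induction N with
  | zero => intro a b h h1; omega
  | succ N ih =>
    intro a b hN h1 h2 hn Ha Hb
    rcases lt_trichotomy a b with hlt | heq | hgt
    · have Hs : PerN n w (b - a) := sub (le_of_lt hlt) hn Ha Hb
      have hg : Nat.gcd a (b - a) = Nat.gcd a b := by
        apply Nat.dvd_antisymm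
        · apply Nat.dvd_gcd (Nat.gcd_dvd_left _ _)
          have h3 : (b - a) + a = b := by omega
          have := Nat.dvd_add (Nat.gcd_dvd_right a (b - a)) (Nat.gcd_dvd_left a (b - a))
          rwa [h3] at this
        · exact Nat.dvd_gcd (Nat.gcd_dvd_left _ _)
            (Nat.dvd_sub (Nat.gcd_dvd_right _ _) (Nat.gcd_dvd_left _ _))
      rw [← hg]
      exact ih a (b - a) (by omega) h1 (by omega) (by omega) Ha Hs
    · subst heq
      rwa [Nat.gcd_self]
    · have Hs : PerN n w (a - b) := sub (le_of_lt hgt) (by omega) Hb Ha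
      have hg : Nat.gcd b (a - b) = Nat.gcd a b := by
        apply Nat.dvd_antisymm
        · apply Nat.dvd_gcd
          · have h3 : (a - b) + b = a := by omega
            have := Nat.dvd_add (Nat.gcd_dvd_right b (a - b)) (Nat.gcd_dvd_left b (a - b))
            rwa [h3] at this
          · exact Nat.gcd_dvd_left _ _
        · rw [Nat.gcd_comm]
          exact Nat.dvd_gcd (Nat.gcd_dvd_left b a)
            (Nat.dvd_sub (Nat.gcd_dvd_right b a) (Nat.gcd_dvd_left b a))
      rw [← hg]
      exact ih b (a - b) (by omega) h2 (by omega) (by omega) Hb Hs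

lemma fw (h1 : 1 ≤ a) (h2 : 1 ≤ b) (hn : a + b ≤ n) (Ha : PerN n w a) (Hb : PerN n w b) :
    PerN n w (Nat.gcd a b) :=
  gcd (a + b) a b le_rfl h1 h2 hn Ha Hb

end PerN

section Key
variable {γ δ : Type*}

/-- If `x` has bounded period `p` on `[0,n)` and its prefix of length `p + n % p`
has period `g` with `g ∣ p`, then `x` has bounded period `g` on `[0,n)`. -/
lemma perN_key {n p g : ℕ} {x : ℕ → γ} (hp : 1 ≤ p) (Hx : PerN n x p) (hgp : g ∣ p)
    (hg : 1 ≤ g) (Hpre : PerN (p + n % p) x g) : PerN n x g := by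
  have hred : ∀ i, i < n → ∃ j k, j < p + n % p ∧ x i = x j ∧ i = j + p * k := by
    intro i
    induction i using Nat.strong_induction_on with
    | _ i ih =>
      intro hin
      by_cases h : i < p + n % p
      · exact ⟨i, 0, h, rfl, by ring⟩
      · have h2 : p ≤ i := by omega
        have e : x (i - p) = x i := by
          have := Hx (i - p) (by omega)
          rwa [Nat.sub_add_cancel h2] at this
        obtain ⟨j, k, h1, h2', h3⟩ := ih (i - p) (by omega) (by omega)
        refine ⟨j, k + 1, h1, by rw [← e, h2'], ?_⟩
        have : p * (k + 1) = p * k + p := by ring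
        omega
  intro i hig
  obtain ⟨a, ka, ha1, ha2, ha3⟩ := hred i (by omega)
  obtain ⟨b, kb, hb1, hb2, hb3⟩ := hred (i + g) hig
  obtain ⟨e, he⟩ := hgp
  have hmod : a % g = b % g := by
    have h1 : i = a + g * (e * ka) := by rw [ha3, he]; ring
    have h2 : i + g = b + g * (e * kb) := by rw [hb3, he]; ring
    have e1 : i % g = a % g := by rw [h1]; exact Nat.add_mul_mod_self_left a g (e * ka)
    have e2 : (i + g) % g = b % g := by rw [h2]; exact Nat.add_mul_mod_self_left b g (e * kb)
    have e3 : (i + g) % g = i % g := Nat.add_mod_right i g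
    omega
  have hxab : x a = x b := by
    rcases le_total a b with h | h
    · exact Hpre.step h hb1 ((Nat.modEq_iff_dvd' h).mp hmod)
    · exact (Hpre.step h ha1 ((Nat.modEq_iff_dvd' h).mp hmod.symm)).symm
  rw [ha2, hb2, hxab]

/-- Transfer of bounded periods through equality of period sets of the short prefix,
in the case `2*p ≤ n`. -/
lemma trans_dir {w : ℕ → γ} {x : ℕ → δ} {n p : ℕ} (hp : 1 ≤ p) (h2p : 2*p ≤ n)
    (Hw : PerN n w p) (Hx : PerN n x p)
    (Heq : ∀ g, g < p + n % p → PerN (p + n % p) w g → PerN (p + n % p) x g) :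
    ∀ q, q < n → PerN n w q → PerN n x q := by
  intro q hq Hwq
  have hrp : n % p < p := Nat.mod_lt _ (by omega)
  have hn2 : p + n % p ≤ n := by
    have hdm := Nat.div_add_mod n p
    have hk2 : 2 ≤ n / p := by
      rw [Nat.le_div_iff_mul_le (by omega)]; omega
    obtain ⟨k', hk'⟩ : ∃ k', n / p = k' + 2 := ⟨n / p - 2, by omega⟩
    have : p * (n / p) = p * k' + 2 * p := by rw [hk']; ring
    omega
  by_cases hq0 : q = 0
  · subst hq0; intro i _; simp
  by_cases hdvd : p ∣ q
  · exact Hx.dvd hdvd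
  by_cases hle : q + p ≤ n
  · set g := Nat.gcd p q with hgdef
    have hgp : g ∣ p := Nat.gcd_dvd_left _ _
    have hgq : g ∣ q := Nat.gcd_dvd_right _ _
    have hg1 : 1 ≤ g := Nat.pos_of_dvd_of_pos hgq (by omega)
    have hglt : g < p := by
      have hgle : g ≤ p := Nat.le_of_dvd (by omega) hgp
      rcases eq_or_lt_of_le hgle with h | h
      · exact absurd (h ▸ hgq) hdvd
      · exact h
    have Hwg : PerN n w g := PerN.fw (by omega) (by omega) (by omega) Hw Hwq
    have Hpg : PerN (p + n % p) x g := Heq g (by omega) (Hwg.mono hn2)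
    have Hxg : PerN n x g := perN_key hp Hx hgp hg1 Hpg
    exact Hxg.dvd hgq
  · -- large period, border transfer
    set b := n - q with hbdef
    have hb1 : 1 ≤ b := by omega
    have hbp : b < p := by omega
    set q₂ := p + n % p - b with hq₂def
    have hdm := Nat.div_add_mod n p
    have hk2 : 2 ≤ n / p := by
      rw [Nat.le_div_iff_mul_le (by omega)]; omega
    obtain ⟨k', hk'⟩ : ∃ k', n / p = k' + 1 := ⟨n / p - 1, by omega⟩
    have hmul : p * (n / p) = p * k' + p := by rw [hk']; ring
    have hdiff : q - q₂ = p * k' := by omega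
    have hdvd2 : p ∣ q - q₂ := by rw [hdiff]; exact ⟨k', rfl⟩
    have hq2le : q₂ ≤ q := by omega
    have Hw2 : PerN (p + n % p) w q₂ := by
      intro i hi
      have hib : i < b := by omega
      have e1 : w i = w (i + q) := Hwq i (by omega)
      have e2 : w (i + q₂) = w (i + q) := by
        refine Hw.step (by omega) (by omega) ?_
        rw [show (i + q) - (i + q₂) = q - q₂ from by omega]
        exact hdvd2
      rw [e1, ← e2]
    have Hx2 : PerN (p + n % p) x q₂ := Heq q₂ (by omega) Hw2
    intro i hi
    have hib : i < b := by omega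
    have e1 : x i = x (i + q₂) := Hx2 i (by omega)
    have e2 : x (i + q₂) = x (i + q) := by
      refine Hx.step (by omega) (by omega) ?_
      rw [show (i + q) - (i + q₂) = q - q₂ from by omega]
      exact hdvd2
    rw [e1, e2]

end Key

section Mid

/-- Glue `Y ++ 0^(L-1) c ++ Y`. -/
def glue (Y : ℕ → Bool) (β L : ℕ) (c : Bool) : ℕ → Bool :=
  fun i => if i < β then Y i else if i = β + L - 1 then c else
    if i < β + L then false else Y (i - (β + L))

variable {Y : ℕ → Bool} {β L i : ℕ} {c : Bool}

lemma glue_lo (h : i < β) : glue Y β L c i = Y i := if_pos h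

lemma glue_mark (hL : 1 ≤ L) : glue Y β L c (β + L - 1) = c := by
  unfold glue
  rw [if_neg (by omega), if_pos rfl]

lemma glue_mid (h1 : β ≤ i) (h2 : i < β + L) (h3 : i ≠ β + L - 1) :
    glue Y β L c i = false := by
  unfold glue
  rw [if_neg (by omega), if_neg h3, if_pos h2]

lemma glue_mid0 (h1 : β ≤ i) (h2 : i < β + L) : glue Y β L false i = false := by
  by_cases h3 : i = β + L - 1
  · subst h3; exact glue_mark (by omega)
  · exact glue_mid h1 h2 h3

lemma glue_hi (hL : 1 ≤ L) (h : β + L ≤ i) : glue Y β L c i = Y (i - (β + L)) := by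
  unfold glue
  rw [if_neg (by omega), if_neg (by omega), if_neg (by omega)]

/-- Key combinatorial lemma: for some choice of the marker bit `c`, the word
`Y ++ 0^(L-1) c ++ Y` has no period below `β + L`. -/
lemma mid_exists (Y : ℕ → Bool) (β L : ℕ) (hL : 1 ≤ L) :
    ∃ c : Bool, ∀ q, 1 ≤ q → q < β + L → ¬ PerN (2*β + L) (glue Y β L c) q := by
  by_contra hcon
  push_neg at hcon
  obtain ⟨q₀, hq₀1, hq₀2, H₀⟩ := hcon false
  obtain ⟨q₁, hq₁1, hq₁2, H₁⟩ := hcon true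
  set n := 2*β + L with hn
  set σ := β + L - q₀ with hσ
  set s := β + L - q₁ with hs
  have hσ1 : 1 ≤ σ := by omega
  have hs1 : 1 ≤ s := by omega
  -- c = true facts
  have f1 : L ≤ q₁ := by
    by_contra h
    push_neg at h
    have h5 := H₁ (β + L - 1 - q₁) (by omega)
    rw [show β + L - 1 - q₁ + q₁ = β + L - 1 from by omega] at h5
    rw [glue_mid (by omega) (by omega) (by omega), glue_mark hL] at h5
    exact Bool.noConfusion h5
  have hsβ : s ≤ β := by omega
  have hβ1 : 1 ≤ β := by omega
  have f2 : Y (s - 1) = true := by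
    have h5 := H₁ (s - 1) (by omega)
    rw [show s - 1 + q₁ = β + L - 1 from by omega] at h5
    rw [glue_lo (by omega), glue_mark hL] at h5
    exact h5
  have f5 : PerN β Y s := by
    intro j hj
    have h5 := H₁ (j + s) (by omega)
    rw [show j + s + q₁ = (β + L) + j from by omega] at h5
    rw [glue_lo (by omega), glue_hi hL (by omega),
      show (β + L) + j - (β + L) = j from by omega] at h5
    exact h5.symm
  have f4 : PerN β Y q₁ := by
    intro j hj
    have h5 := H₁ j (by omega)
    rwa [glue_lo (by omega), glue_lo (by omega)] at h5
  have g4' : PerN β Y q₀ := by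
    intro j hj
    have h5 := H₀ j (by omega)
    rwa [glue_lo (by omega), glue_lo (by omega)] at h5
  have f3 : L ≤ s := by
    by_contra h
    push_neg at h
    have Z : ∀ j, β - s ≤ j → j < β → Y j = false := by
      intro j hj1 hj2
      have h5 := H₁ (j + s) (by omega)
      rw [show j + s + q₁ = (β + L) + j from by omega] at h5
      rw [glue_mid (by omega) (by omega) (by omega), glue_hi hL (by omega),
        show (β + L) + j - (β + L) = j from by omega] at h5
      exact h5.symm
    have allz : ∀ d j, β - j ≤ d → j < β → Y j = false := by
      intro d
      induction d with
      | zero => intro j h1 h2; exact absurd h1 (by omega)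
      | succ d ih =>
        intro j h1 h2
        by_cases hc : β - s ≤ j
        · exact Z j hc h2
        · rw [f5 j (by omega)]
          exact ih (j + s) (by omega) (by omega)
    exact absurd (allz β (s-1) (by omega) (by omega)) (by rw [f2]; simp)
  have f6 : Y (β + L - 1 - s) = true := by
    have h5 := H₁ (β + L - 1) (by omega)
    rw [show β + L - 1 + q₁ = (β + L) + (β + L - 1 - s) from by omega] at h5
    rw [glue_mark hL, glue_hi hL (by omega),
      show (β + L) + (β + L - 1 - s) - (β + L) = β + L - 1 - s from by omega] at h5
    exact h5.symm
  -- c = false facts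
  have gσ1 : σ ≤ β := by
    by_contra h
    push_neg at h
    have Z0 : ∀ j, β - q₀ ≤ j → j < β → Y j = false := by
      intro j h1 h2
      have h5 := H₀ j (by omega)
      rw [glue_lo (by omega), glue_mid0 (by omega) (by omega)] at h5
      exact h5
    have allz : ∀ d j, β - j ≤ d → j < β → Y j = false := by
      intro d
      induction d with
      | zero => intro j h1 h2; exact absurd h1 (by omega)
      | succ d ih =>
        intro j h1 h2
        by_cases hc : β - q₀ ≤ j
        · exact Z0 j hc h2
        · rw [g4' j (by omega)]
          exact ih (j + q₀) (by omega) (by omega)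
    exact absurd (allz β (s-1) (by omega) (by omega)) (by rw [f2]; simp)
  have g4 : PerN β Y σ := by
    intro j hj
    have h5 := H₀ (j + σ) (by omega)
    rw [show j + σ + q₀ = (β + L) + j from by omega] at h5
    rw [glue_lo (by omega), glue_hi hL (by omega),
      show (β + L) + j - (β + L) = j from by omega] at h5
    exact h5.symm
  have gσL : L ≤ σ := by
    by_contra h
    push_neg at h
    have zpre : ∀ j, j < σ → Y j = false := by
      intro j hj
      have h5 := H₀ j (by omega)
      rw [glue_lo (by omega), glue_mid0 (by omega) (by omega)] at h5
      exact h5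
    have allz : ∀ j, j < β → Y j = false := by
      intro j
      induction j using Nat.strong_induction_on with
      | _ j ih =>
        intro hj
        by_cases hc : j < σ
        · exact zpre j hc
        · have e := g4 (j - σ) (by omega)
          rw [show j - σ + σ = j from by omega] at e
          rw [← e]
          exact ih (j - σ) (by omega) (by omega)
    exact absurd (allz (s-1) (by omega)) (by rw [f2]; simp)
  have g2 : ∀ i, σ - L ≤ i → i < σ → Y i = false := by
    intro i h1 h2
    have h5 := H₀ i (by omega)
    rw [glue_lo (by omega), glue_mid0 (by omega) (by omega)] at h5
    exact h5
  have g3 : ∀ j, β - σ ≤ j → j < β - σ + L → Y j = false := by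
    intro j h1 h2
    have h5 := H₀ (j + σ) (by omega)
    rw [show j + σ + q₀ = (β + L) + j from by omega] at h5
    rw [glue_mid0 (by omega) (by omega), glue_hi hL (by omega),
      show (β + L) + j - (β + L) = j from by omega] at h5
    exact h5.symm
  -- final case analysis on s + σ
  rcases le_or_gt (s + σ) β with hc1 | hc1
  · have hg := PerN.fw hs1 hσ1 hc1 f5 g4
    have hgs : Nat.gcd s σ ∣ s := Nat.gcd_dvd_left _ _
    have hgσ : Nat.gcd s σ ∣ σ := Nat.gcd_dvd_right _ _
    have hg1 : 1 ≤ Nat.gcd s σ := Nat.pos_of_dvd_of_pos hgs hs1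
    have hgles : Nat.gcd s σ ≤ s := Nat.le_of_dvd (by omega) hgs
    have hgleσ : Nat.gcd s σ ≤ σ := Nat.le_of_dvd (by omega) hgσ
    have e1 : Y (Nat.gcd s σ - 1) = Y (s - 1) := by
      refine hg.step (by omega) (by omega) ?_
      rw [show s - 1 - (Nat.gcd s σ - 1) = s - Nat.gcd s σ from by omega]
      exact Nat.dvd_sub hgs dvd_rfl
    have e2 : Y (Nat.gcd s σ - 1) = Y (σ - 1) := by
      refine hg.step (by omega) (by omega) ?_
      rw [show σ - 1 - (Nat.gcd s σ - 1) = σ - Nat.gcd s σ from by omega]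
      exact Nat.dvd_sub hgσ dvd_rfl
    have h0 : Y (σ - 1) = false := g2 (σ - 1) (by omega) (by omega)
    rw [f2] at e1
    rw [h0] at e2
    rw [e1] at e2
    exact Bool.noConfusion e2
  rcases le_or_gt (s + σ) (β + L) with hc2 | hc2
  · have h0 : Y (s - 1) = false := g3 (s - 1) (by omega) (by omega)
    rw [f2] at h0
    exact Bool.noConfusion h0
  rcases le_or_gt (s + σ) (β + 2*L - 1) with hc3 | hc3
  · have h0 : Y (β + L - 1 - s) = false := g2 _ (by omega) (by omega)
    rw [f6] at h0
    exact Bool.noConfusion h0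
  · have hsum : q₀ + q₁ ≤ β := by omega
    have hg := PerN.fw (by omega) (by omega) hsum g4' f4
    have hgs : Nat.gcd q₀ q₁ ∣ q₀ := Nat.gcd_dvd_left _ _
    have hgσ : Nat.gcd q₀ q₁ ∣ q₁ := Nat.gcd_dvd_right _ _
    have hg1 : 1 ≤ Nat.gcd q₀ q₁ := Nat.pos_of_dvd_of_pos hgs (by omega)
    have hgle0 : Nat.gcd q₀ q₁ ≤ q₀ := Nat.le_of_dvd (by omega) hgs
    have hgle1 : Nat.gcd q₀ q₁ ≤ q₁ := Nat.le_of_dvd (by omega) hgσ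
    have e1 : Y (Nat.gcd q₀ q₁ - 1) = Y (q₁ - 1) := by
      refine hg.step (by omega) (by omega) ?_
      rw [show q₁ - 1 - (Nat.gcd q₀ q₁ - 1) = q₁ - Nat.gcd q₀ q₁ from by omega]
      exact Nat.dvd_sub hgσ dvd_rfl
    have e2 : Y (Nat.gcd q₀ q₁ - 1) = Y (q₀ - 1) := by
      refine hg.step (by omega) (by omega) ?_
      rw [show q₀ - 1 - (Nat.gcd q₀ q₁ - 1) = q₀ - Nat.gcd q₀ q₁ from by omega]
      exact Nat.dvd_sub hgs dvd_rfl
    have h1 : Y (q₁ - 1) = true := by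
      rw [show q₁ - 1 = β + L - 1 - s from by omega]
      exact f6
    have h2 : Y (q₀ - 1) = false := g3 _ (by omega) (by omega)
    rw [h1] at e1
    rw [h2] at e2
    rw [e1] at e2
    exact Bool.noConfusion e2

end Mid

/-- Main theorem: every bounded-period structure over any alphabet is realized
by a binary word of the same length. -/
theorem bin_exists {α : Type*} : ∀ (n : ℕ) (w : ℕ → α),
    ∃ x : ℕ → Bool, ∀ q, q < n → (PerN n w q ↔ PerN n x q) := by
  intro n
  induction n using Nat.strong_induction_on with
  | _ n IH =>
    intro w
    classical
    by_cases hper : ∃ q, 1 ≤ q ∧ q < n ∧ PerN n w q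
    · obtain ⟨hp1, hpn, hpw⟩ := Nat.find_spec hper
      set p := Nat.find hper with hpdef
      have hmin : ∀ q, 1 ≤ q → q < p → ¬ PerN n w q := by
        intro q h1 h2 hq
        exact Nat.find_min hper h2 ⟨h1, by omega, hq⟩
      by_cases h2p : 2*p ≤ n
      · -- small minimal period: recurse on prefix of length p + n % p
        have hrp : n % p < p := Nat.mod_lt _ (by omega)
        have hn₂lt : p + n % p < n := by omega
        obtain ⟨y, hy⟩ := IH (p + n % p) hn₂lt w
        set ρ : ℕ → ℕ := fun i => if i < p + n % p then i else n % p + (i - n % p) % p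
          with hρ
        have hρlo : ∀ i, i < p + n % p → ρ i = i := by
          intro i hi; simp only [hρ]; rw [if_pos hi]
        have hstep : ∀ i, n % p ≤ i → ρ (i + p) = ρ i := by
          intro i hi
          have h1 : ¬ (i + p < p + n % p) := by omega
          simp only [hρ]
          rw [if_neg h1]
          by_cases h2 : i < p + n % p
          · rw [if_pos h2]
            rw [show i + p - n % p = (i - n % p) + p from by omega, Nat.add_mod_right]
            rw [Nat.mod_eq_of_lt (by omega : i - n % p < p)]
            omega
          · rw [if_neg h2]
            rw [show i + p - n % p = (i - n % p) + p from by omega, Nat.add_mod_right]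
        have Hxp : PerN n (fun i => y (ρ i)) p := by
          intro i hip
          by_cases hir : i < n % p
          · have hyp : PerN (p + n % p) y p :=
              (hy p (by omega)).mp (hpw.mono (by omega))
            show y (ρ i) = y (ρ (i + p))
            rw [hρlo i (by omega), hρlo (i + p) (by omega)]
            exact hyp i (by omega)
          · show y (ρ i) = y (ρ (i + p))
            rw [hstep i (by omega)]
        have hagree : ∀ g, PerN (p + n % p) (fun i => y (ρ i)) g ↔ PerN (p + n % p) y g := by
          intro g
          constructor <;> intro H i hi
          · have h5 := H i hi
            simp only at h5
            rwa [hρlo i (by omega), hρlo (i + g) (by omega)] at h5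
          · show y (ρ i) = y (ρ (i + g))
            rw [hρlo i (by omega), hρlo (i + g) (by omega)]
            exact H i hi
        have Heq : ∀ g, g < p + n % p → PerN (p + n % p) w g →
            PerN (p + n % p) (fun i => y (ρ i)) g := by
          intro g hg hwg
          exact (hagree g).mpr ((hy g hg).mp hwg)
        have Heq' : ∀ g, g < p + n % p → PerN (p + n % p) (fun i => y (ρ i)) g →
            PerN (p + n % p) w g := by
          intro g hg hxg
          exact (hy g hg).mpr ((hagree g).mp hxg)
        refine ⟨fun i => y (ρ i), fun q hq => ⟨?_, ?_⟩⟩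
        · exact trans_dir (by omega) h2p hpw Hxp Heq q hq
        · exact trans_dir (by omega) h2p Hxp hpw Heq' q hq
      · -- large minimal period: glue construction
        set β := n - p with hβdef
        set L := 2*p - n with hLdef
        have hLpos : 1 ≤ L := by omega
        have hβL : β + L = p := by omega
        have hnval : 2*β + L = n := by omega
        obtain ⟨Y, hY⟩ := IH β (by omega) w
        obtain ⟨c, hc⟩ := mid_exists Y β L hLpos
        have Hxp : PerN n (glue Y β L c) p := by
          intro i hip
          have hiβ : i < β := by omega
          rw [glue_lo hiβ, glue_hi hLpos (by omega),
            show i + p - (β + L) = i from by omega]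
        refine ⟨glue Y β L c, fun q hq => ?_⟩
        rcases Nat.eq_zero_or_pos q with hq0 | hq0
        · subst hq0
          constructor <;> intro _ <;> (intro i _; simp)
        rcases lt_or_ge q p with hqp | hqp
        · constructor
          · intro hw; exact absurd hw (hmin q hq0 hqp)
          · intro hx'
            have hcq := hc q hq0 (by omega)
            rw [hnval] at hcq
            exact absurd hx' hcq
        · set b := n - q with hbdef
          have hb1 : 1 ≤ b := by omega
          have hbβ : b ≤ β := by omega
          have hw_iff : PerN n w q ↔ PerN β w (β - b) := by
            constructor
            · intro H i hi
              have hib : i < b := by omega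
              have e1 : w i = w (i + q) := H i (by omega)
              have e2 : w (i + (β - b)) = w ((i + (β - b)) + p) := hpw _ (by omega)
              rw [show (i + (β - b)) + p = i + q from by omega] at e2
              rw [e1, ← e2]
            · intro H i hi
              have hib : i < b := by omega
              have e1 : w i = w (i + (β - b)) := H i (by omega)
              have e2 : w (i + (β - b)) = w ((i + (β - b)) + p) := hpw _ (by omega)
              rw [show (i + (β - b)) + p = i + q from by omega] at e2
              rw [e1, e2]
          have hx_iff : PerN n (glue Y β L c) q ↔ PerN β (glue Y β L c) (β - b) := by
            constructor
            · intro H i hi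
              have hib : i < b := by omega
              have e1 := H i (by omega)
              have e2 := Hxp (i + (β - b)) (by omega)
              rw [show (i + (β - b)) + p = i + q from by omega] at e2
              rw [e1, ← e2]
            · intro H i hi
              have hib : i < b := by omega
              have e1 := H i (by omega)
              have e2 := Hxp (i + (β - b)) (by omega)
              rw [show (i + (β - b)) + p = i + q from by omega] at e2
              rw [e1, e2]
          have hYx : PerN β (glue Y β L c) (β - b) ↔ PerN β Y (β - b) := by
            constructor <;> intro H i hi
            · have h5 := H i hi
              rwa [glue_lo (by omega), glue_lo (by omega)] at h5
            · rw [glue_lo (by omega), glue_lo (by omega)]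
              exact H i hi
          rw [hw_iff, hx_iff, hYx]
          exact hY (β - b) (by omega)
    · push_neg at hper
      refine ⟨fun i => decide (i = n - 1), fun q hq => ?_⟩
      rcases Nat.eq_zero_or_pos q with hq0 | hq0
      · subst hq0
        constructor <;> intro _ <;> (intro i _; simp)
      constructor
      · intro hw
        exact absurd hw (hper q hq0 hq)
      · intro hx'
        have h5 := hx' (n - 1 - q) (by omega)
        rw [show n - 1 - q + q = n - 1 from by omega] at h5
        simp at h5
        omega

theorem correlation_alphabet_independent {α : Type*} {n : ℕ}
    (u' v' : Fin n → α) (t : Fin n → Bool) (h : IsCorr n u' v' t) :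
    ∃ u v : Fin n → Bool, IsCorr n u v t := by
  classical
  by_cases hS : ∃ k : ℕ, ∃ hk : k < n, t ⟨k, hk⟩ = true
  · set k0 := Nat.find hS with hk0def
    obtain ⟨hk0n, hk0t⟩ := Nat.find_spec hS
    have hmin : ∀ (k : ℕ) (hk : k < n), k < k0 → t ⟨k, hk⟩ = false := by
      intro k hk hlt
      have h2 := Nat.find_min hS hlt
      push_neg at h2
      exact Bool.eq_false_iff.mpr (h2 hk)
    have hn0 : 0 < n := by omega
    set m := n - k0 with hm
    have hm1 : 1 ≤ m := by omega
    set w : ℕ → α := fun j => v' ⟨j % n, Nat.mod_lt _ hn0⟩ with hw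
    obtain ⟨x, hx⟩ := bin_exists m w
    have hwv : ∀ (j : ℕ) (hj : j < n), w j = v' ⟨j, hj⟩ := by
      intro j hj
      simp only [hw]
      exact congrArg v' (Fin.ext (Nat.mod_eq_of_lt hj))
    have hcor0 : ∀ (i : ℕ) (hi : k0 + i < n), u' ⟨k0 + i, hi⟩ = v' ⟨i, by omega⟩ := by
      have h0 := (h ⟨k0, hk0n⟩).mp hk0t
      intro i hi
      exact h0 i hi
    have hu'' : ∀ (a : ℕ) (ha : a < n), k0 ≤ a → u' ⟨a, ha⟩ = w (a - k0) := by
      intro a ha hb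
      have h1 := hcor0 (a - k0) (by omega)
      have hval : a = k0 + (a - k0) := by omega
      have h2 : u' ⟨a, ha⟩ = u' ⟨k0 + (a - k0), by omega⟩ := congrArg u' (Fin.ext hval)
      exact h2.trans (h1.trans (hwv (a - k0) (by omega)).symm)
    refine ⟨fun k => if (k : ℕ) < k0 then !(x 0) else x ((k : ℕ) - k0),
           fun j => if (j : ℕ) < m then x (j : ℕ) else false, ?_⟩
    intro k
    have hkn := k.isLt
    by_cases hk : (k : ℕ) < k0
    · have hf : t k = false := by
        have h2 := hmin (k : ℕ) k.isLt hk
        have h3 : (⟨(k : ℕ), k.isLt⟩ : Fin n) = k := Fin.ext rfl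
        rwa [h3] at h2
      rw [hf]
      constructor
      · intro h5
        exact absurd h5 (by simp)
      · intro hall
        exfalso
        have h5 : (if (k : ℕ) + 0 < k0 then !(x 0) else x ((k : ℕ) + 0 - k0))
            = (if (0 : ℕ) < m then x 0 else false) := hall 0 (by omega)
        rw [if_pos (by omega), if_pos (by omega)] at h5
        simp at h5
    · push_neg at hk
      set pp := (k : ℕ) - k0 with hpp
      have hppm : pp < m := by omega
      have lhsPer : t k = true → PerN m w pp := by
        intro ht i hi
        have H := (h k).mp ht
        have h2 := H i (by omega)
        calc w i = v' ⟨i, by omega⟩ := hwv i (by omega)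
          _ = u' ⟨(k : ℕ) + i, by omega⟩ := h2.symm
          _ = w ((k : ℕ) + i - k0) := hu'' _ (by omega) (by omega)
          _ = w (i + pp) := by rw [show (k : ℕ) + i - k0 = i + pp from by omega]
      have perToLhs : PerN m w pp → t k = true := by
        intro hP
        apply (h k).mpr
        intro j hj
        calc u' ⟨(k : ℕ) + j, hj⟩ = w ((k : ℕ) + j - k0) := hu'' _ hj (by omega)
          _ = w (j + pp) := by rw [show (k : ℕ) + j - k0 = j + pp from by omega]
          _ = w j := (hP j (by omega)).symm
          _ = v' ⟨j, by omega⟩ := hwv j (by omega)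
      constructor
      · intro ht j hj
        show (if (k : ℕ) + j < k0 then !(x 0) else x ((k : ℕ) + j - k0))
            = (if j < m then x j else false)
        rw [if_neg (by omega), if_pos (by omega)]
        have hPx : PerN m x pp := (hx pp hppm).mp (lhsPer ht)
        have h5 := hPx j (by omega)
        rw [show (k : ℕ) + j - k0 = j + pp from by omega]
        exact h5.symm
      · intro hall
        apply perToLhs
        apply (hx pp hppm).mpr
        intro i hi
        have h5 : (if (k : ℕ) + i < k0 then !(x 0) else x ((k : ℕ) + i - k0))
            = (if i < m then x i else false) := hall i (by omega)
        rw [if_neg (by omega), if_pos (by omega)] at h5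
        rw [show (k : ℕ) + i - k0 = i + pp from by omega] at h5
        exact h5.symm
  · push_neg at hS
    refine ⟨fun _ => false, fun _ => true, ?_⟩
    intro k
    have hkn := k.isLt
    have hf : t k = false := by
      have h3 : (⟨(k : ℕ), k.isLt⟩ : Fin n) = k := Fin.ext rfl
      have h2 := hS (k : ℕ) k.isLt
      rw [h3] at h2
      exact Bool.eq_false_iff.mpr h2
    rw [hf]
    constructor
    · intro h5
      exact absurd h5 (by simp)
    · intro hall
      exfalso
      have h5 : (false : Bool) = true := hall 0 (by omega)
      exact Bool.noConfusion h5
end
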